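/- Let G be a finite simple graph, λ a layering of G, and let r', r, ℓ, m be integers with 0 ≤ r' ≤ r and ℓ > 4r. Let R be an (ℓ, r)-cover of the integers, let p be an m-plan for R, and let (ψ_S) be an r'-local predicate family on G. Suppose that for each I ∈ R there is no set of p(I) + 1 vertices of λ⁻¹(M_r(I)), pairwise at distance greater than 2r' in G[λ⁻¹(I)], at each of which ψ_{λ⁻¹(I)} fails. Then there is no set of m + 1 vertices of G, pairwise at distance greater than 2r' in G, at each of which ψ_{V(G)} fails. -/

import Mathlib

/-- A layering of a simple graph: adjacent vertices differ by at most 1. -/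
def IsLayering {V : Type*} (G : SimpleGraph V) (lam : V → ℤ) : Prop :=
  ∀ ⦃u v : V⦄, G.Adj u v → |lam u - lam v| ≤ 1

/-- The spanning subgraph of `G` keeping only the edges with both ends in `U`.
Reachability and distances between vertices of `U` in this graph coincide with those
in the induced subgraph `G[U]`. -/
def restrictSet {V : Type*} (G : SimpleGraph V) (U : Set V) : SimpleGraph V where
  Adj u v := G.Adj u v ∧ u ∈ U ∧ v ∈ U
  symm := ⟨fun _ _ ⟨h, hu, hv⟩ => ⟨h.symm, hv, hu⟩⟩
  loopless := ⟨fun _ ⟨h, _, _⟩ => G.ne_of_adj h rfl⟩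

/-- The interval of `l` consecutive integers with left endpoint `i`. -/
def Iv (l : ℕ) (i : ℤ) : Set ℤ := Set.Icc i (i + l - 1)

/-- The middle part `M_d(I)` of the interval of length `l` with left endpoint `i`. -/
def Md (l d : ℕ) (i : ℤ) : Set ℤ := Set.Icc (i + d) (i + l - d - 1)

/-- `i` is a left endpoint of an interval of the `(l, r)`-cover with residue `n`,
i.e. `i ≡ n (mod l − 2r)`. -/
def inCover (l r : ℕ) (n i : ℤ) : Prop := ((l : ℤ) - 2 * r) ∣ (i - n)

/-- An `m`-plan for the `(l, r)`-cover with residue `n`: a finitely supported function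
on intervals (identified with their left endpoints) with values summing to `m`,
supported on the intervals of the cover. -/
def IsPlan (l r : ℕ) (n : ℤ) (m : ℕ) (p : ℤ → ℕ) : Prop :=
  {i | p i ≠ 0}.Finite ∧ (∀ i, p i ≠ 0 → inCover l r n i) ∧ ∑ᶠ i, p i = m

/-- All vertices of `W` are pairwise at distance greater than `2r'` in `G` (vertices in
different components being at infinite distance). -/
def PairwiseFar {V : Type*} (G : SimpleGraph V) (r' : ℕ) (W : Finset V) : Prop :=
  ∀ w ∈ W, ∀ w' ∈ W, w ≠ w' → (G.Reachable w w' → 2 * r' < G.dist w w')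

/-- An `r'`-local predicate family on `G`: a family of predicates `ψ S` (for `S ⊆ V`)
such that whenever `S` contains the ball of radius `r'` around `v`, `ψ S v ↔ ψ univ v`. -/
def IsLocalFamily {V : Type*} (G : SimpleGraph V) (r' : ℕ) (ψ : Set V → V → Prop) : Prop :=
  ∀ (v : V) (S : Set V), {u | G.Reachable v u ∧ G.dist v u ≤ r'} ⊆ S → (ψ S v ↔ ψ Set.univ v)

/-!
Partition ℤ into the middle parts `M_r(I)` of the intervals `I` of the cover: they have
length `ℓ - 2r`, which is exactly the period of the cover. If `W` is a set of pairwise far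
vertices of `G` at which `ψ_{V(G)}` fails, then the vertices of `W` whose layer lies in
`M_r(I)` stay pairwise far in `G[λ⁻¹(I)]`, and `ψ_{λ⁻¹(I)}` still fails at them, because
the layering keeps the `r'`-ball of such a vertex within `λ⁻¹(I)`. Hence at most `p(I)`
vertices of `W` fall into `M_r(I)`, and `|W| ≤ Σ p(I) = m`.
-/

open Finset

namespace IsLayering

variable {V : Type*} {G : SimpleGraph V} {lam : V → ℤ}

theorem abs_sub_le_length (hlam : IsLayering G lam) {u v : V} (q : G.Walk u v) :
    |lam u - lam v| ≤ q.length := by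
  induction q with
  | nil => simp
  | @cons a b c hab q ih =>
    have := abs_sub_le (lam a) (lam b) (lam c)
    have := hlam hab
    push_cast [SimpleGraph.Walk.length_cons]
    linarith

theorem abs_sub_le_dist (hlam : IsLayering G lam) {u v : V} (huv : G.Reachable u v) :
    |lam u - lam v| ≤ G.dist u v := by
  obtain ⟨q, hq⟩ := huv.exists_walk_length_eq_dist
  simpa [hq] using hlam.abs_sub_le_length q

theorem ball_subset_preimage_Iv (hlam : IsLayering G lam) {r' r l : ℕ} {i : ℤ} (hr : r' ≤ r)
    {v : V} (hv : lam v ∈ Md l r i) :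
    {u | G.Reachable v u ∧ G.dist v u ≤ r'} ⊆ lam ⁻¹' Iv l i := by
  rintro u ⟨hvu, hdist⟩
  have := abs_le.mp ((hlam.abs_sub_le_dist hvu).trans (Int.ofNat_le.mpr hdist))
  simp only [Md, Set.mem_Icc] at hv
  simp only [Set.mem_preimage, Iv, Set.mem_Icc]
  omega

end IsLayering

theorem restrictSet_le {V : Type*} (G : SimpleGraph V) (U : Set V) : restrictSet G U ≤ G :=
  fun _ _ h => h.1

theorem PairwiseFar.mono {V : Type*} {G H : SimpleGraph V} {r' : ℕ} {W W' : Finset V}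
    (hfar : PairwiseFar G r' W) (hHG : H ≤ G) (hW' : W' ⊆ W) : PairwiseFar H r' W' :=
  fun w hw w' hw' hne hreach =>
    (hfar w (hW' hw) w' (hW' hw') hne (hreach.mono hHG)).trans_le (hreach.dist_anti hHG)

/-- The left endpoint of the interval of the `(l, r)`-cover with residue `n` whose middle
part `M_r` contains `x`. -/
def coverIndex (l r : ℕ) (n x : ℤ) : ℤ := x - r - (x - r - n) % ((l : ℤ) - 2 * r)

theorem inCover_coverIndex (l r : ℕ) (n x : ℤ) : inCover l r n (coverIndex l r n x) :=
  ⟨(x - r - n) / ((l : ℤ) - 2 * r), by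
    have := Int.mul_ediv_add_emod (x - r - n) ((l : ℤ) - 2 * r)
    simp only [coverIndex]
    linarith⟩

theorem mem_Md_coverIndex {l r : ℕ} (hl : 2 * r < l) (n x : ℤ) :
    x ∈ Md l r (coverIndex l r n x) := by
  have hd : (0 : ℤ) < l - 2 * r := by omega
  have := Int.emod_nonneg (x - r - n) hd.ne'
  have := Int.emod_lt_of_pos (x - r - n) hd
  simp only [Md, coverIndex, Set.mem_Icc]
  omega

theorem card_le_finsum_of_card_fiber_le {α β : Type*} [DecidableEq β] {W : Finset α}
    {f : α → β} {p : β → ℕ} (hp : (Function.support p).Finite)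
    (hfiber : ∀ i, #{w ∈ W | f w = i} ≤ p i) : #W ≤ ∑ᶠ i, p i := by
  let t := W.image f ∪ hp.toFinset
  calc #W = ∑ i ∈ t, #{w ∈ W | f w = i} :=
        card_eq_sum_card_fiberwise fun w hw => mem_union_left _ (mem_image_of_mem f hw)
    _ ≤ ∑ i ∈ t, p i := sum_le_sum fun i _ => hfiber i
    _ = ∑ᶠ i, p i := (finsum_eq_sum_of_support_subset p (by simp [t])).symm

theorem stmt_12_general {V : Type*} (G : SimpleGraph V) (lam : V → ℤ)
    (hlam : IsLayering G lam)
    (r' r l m : ℕ) (hr : r' ≤ r) (hl : 4 * r < l)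
    (n : ℤ) (p : ℤ → ℕ) (hp : IsPlan l r n m p)
    (ψ : Set V → V → Prop) (hψ : IsLocalFamily G r' ψ)
    (hW : ∀ i : ℤ, inCover l r n i →
      ¬ ∃ W : Finset V, W.card = p i + 1 ∧ (∀ w ∈ W, lam w ∈ Md l r i) ∧
          PairwiseFar (restrictSet G (lam ⁻¹' Iv l i)) r' W ∧
          ∀ w ∈ W, ¬ ψ (lam ⁻¹' Iv l i) w) :
    ¬ ∃ W : Finset V, W.card = m + 1 ∧ PairwiseFar G r' W ∧
        ∀ w ∈ W, ¬ ψ Set.univ w := by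
  rintro ⟨W, hcard, hfar, hfail⟩
  obtain ⟨hfin, -, hsum⟩ := hp
  have hfiber (i : ℤ) : #{w ∈ W | coverIndex l r n (lam w) = i} ≤ p i := by
    by_contra! hbig
    obtain ⟨W', hW'W, hW'card⟩ := exists_subset_card_eq hbig
    obtain ⟨w₀, hw₀⟩ : W'.Nonempty := card_pos.mp (by omega)
    have hindex {w} (hw : w ∈ W') : coverIndex l r n (lam w) = i := (mem_filter.mp (hW'W hw)).2
    have hmid {w} (hw : w ∈ W') : lam w ∈ Md l r i :=
      hindex hw ▸ mem_Md_coverIndex (by omega) n (lam w)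
    refine hW i (hindex hw₀ ▸ inCover_coverIndex l r n (lam w₀))
      ⟨W', hW'card, fun w hw => hmid hw,
        hfar.mono (restrictSet_le G _) (hW'W.trans (filter_subset _ W)), fun w hw hψw => ?_⟩
    exact hfail w (mem_filter.mp (hW'W hw)).1
      ((hψ w _ (hlam.ball_subset_preimage_Iv hr (hmid hw))).mp hψw)
  have := card_le_finsum_of_card_fiber_le hfin hfiber
  omega

/-- If for each interval `I` of an `(l, r)`-cover there is no set of `p(I) + 1` vertices
of `λ⁻¹(M_r(I))`, pairwise far apart in `G[λ⁻¹(I)]`, at each of which `ψ_{λ⁻¹(I)}` fails,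
then there is no set of `m + 1` vertices of `G`, pairwise far apart in `G`, at each of
which `ψ_{V(G)}` fails. -/
theorem stmt_12 {V : Type*} [Fintype V] (G : SimpleGraph V) (lam : V → ℤ)
    (hlam : IsLayering G lam)
    (r' r l m : ℕ) (hr : r' ≤ r) (hl : 4 * r < l)
    (n : ℤ) (p : ℤ → ℕ) (hp : IsPlan l r n m p)
    (ψ : Set V → V → Prop) (hψ : IsLocalFamily G r' ψ)
    (hW : ∀ i : ℤ, inCover l r n i →
      ¬ ∃ W : Finset V, W.card = p i + 1 ∧ (∀ w ∈ W, lam w ∈ Md l r i) ∧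
          PairwiseFar (restrictSet G (lam ⁻¹' Iv l i)) r' W ∧
          ∀ w ∈ W, ¬ ψ (lam ⁻¹' Iv l i) w) :
    ¬ ∃ W : Finset V, W.card = m + 1 ∧ PairwiseFar G r' W ∧
        ∀ w ∈ W, ¬ ψ Set.univ w :=
  stmt_12_general G lam hlam r' r l m hr hl n p hp ψ hψ hW
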